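/- Let G be a group with a subgroup U commensurated by G such that G is generated by finitely many left cosets of U, and let κ be a set of subgroups of G such that G = ⟨U ∪ ⋃κ⟩, such that U acts on κ by conjugation with finite orbits, and such that the index of K ∩ U in K is finite for every K ∈ κ. Then there is a finite subset {K_1, …, K_n} of κ that is a union of U-conjugation orbits on κ and satisfies G = ⟨U, K_1, …, K_n⟩. Moreover, for any such subset there exist subgroups L_1, …, L_n of U such that: each L_i is a subgroup of finite index in K_i; each L_i normalises both K_j and L_j for every pair (i,j); and the product L = L_1 L_2 ⋯ L_n is a normal subgroup of U that is commensurated by G. -/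

import Mathlib

open Pointwise

/-- The conjugate of a subgroup by a group element. -/
def conjSub {G : Type*} [Group G] (g : G) (K : Subgroup G) : Subgroup G :=
  K.map (MulAut.conj g).toMonoidHom

/-- A subgroup `K` is commensurated by `G` if each of its conjugates is commensurate with it. -/
def CommensuratedBy {G : Type*} [Group G] (K : Subgroup G) : Prop :=
  ∀ g : G, Subgroup.Commensurable (conjSub g K) K

/-!
If `G = ⟨FU⟩` with `F` finite, each `f ∈ F` already lies in the subgroup generated by `U` and
finitely many members of `κ`; closing these under the finite `U`-orbits gives the `K_i`.

For the second part put `N = U ∩ ⋂ᵢ N_G(K_i)`: it has finite index in `U` because the `U`-orbits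
are finite, and it is normal in `U` because `U` permutes the `K_i`. Take `L_i = N ∩ K_i`; then `U`
normalises `L = L_1 ⋯ L_n`, so `L` is commensurated by `G = ⟨U, K_1, …, K_n⟩` as soon as every
`k ∈ K_i` commensurates it. For `x ∈ L ∩ kNk⁻¹` the element `k⁻¹xkx⁻¹ = k⁻¹(xkx⁻¹)` lies in
`N ∩ K_i ⊆ L`, hence `L ∩ kNk⁻¹ ⊆ kLk⁻¹`; and `L ∩ kNk⁻¹` has finite index in `L` because `N` has
finite index in `U` and `U` is commensurated.
-/

open ConjAct

section

variable {G : Type*} [Group G]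

theorem conjSub_eq_smul (g : G) (K : Subgroup G) : conjSub g K = toConjAct g • K := rfl

theorem commensuratedBy_iff_commensurator_eq_top (K : Subgroup G) :
    CommensuratedBy K ↔ Subgroup.Commensurable.commensurator K = ⊤ := by
  simp [CommensuratedBy, conjSub_eq_smul, eq_top_iff, SetLike.le_def]

namespace Subgroup

theorem closure_union_iUnion {ι : Sort*} (U : Subgroup G) (K : ι → Subgroup G) :
    Subgroup.closure ((U : Set G) ∪ ⋃ i, (K i : Set G)) = U ⊔ ⨆ i, K i := by
  simp only [Subgroup.closure_union, Subgroup.closure_iUnion, closure_eq]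

theorem le_normalizer_of_forall_smul_le {U H : Subgroup G}
    (h : ∀ u ∈ U, toConjAct u • H ≤ H) : U ≤ normalizer (H : Set G) := by
  intro u hu
  refine conjAct_pointwise_smul_iff.1 (le_antisymm (h u hu) ?_)
  rw [subset_pointwise_smul_iff, ← toConjAct_inv]
  exact h u⁻¹ (inv_mem hu)

theorem relIndex_normalizer_ne_zero {U K : Subgroup G}
    (h : {K' : Subgroup G | ∃ u ∈ U, K' = toConjAct u • K}.Finite) :
    (normalizer (K : Set G)).relIndex U ≠ 0 := by
  let _ : MulAction U (Subgroup G) :=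
    MulAction.compHom _ ((MulEquiv.toMonoidHom toConjAct).comp U.subtype)
  have hstab : MulAction.stabilizer U K = (normalizer (K : Set G)).subgroupOf U := by
    ext u
    exact conjAct_pointwise_smul_iff
  have horbit : MulAction.orbit U K = {K' : Subgroup G | ∃ u ∈ U, K' = toConjAct u • K} := by
    ext K'
    constructor
    · rintro ⟨u, rfl⟩
      exact ⟨u, u.2, rfl⟩
    · rintro ⟨u, hu, rfl⟩
      exact ⟨⟨u, hu⟩, rfl⟩
  rw [relIndex, ← hstab, MulAction.index_stabilizer, horbit]
  exact ((Set.ncard_pos h).2 ⟨K, 1, one_mem U, by simp⟩).ne'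

theorem exists_finset_sup_biSup_eq_top {ι : Type*} {U : Subgroup G} {K : ι → Subgroup G}
    (hgen : ∃ F : Finset G, Subgroup.closure ((F : Set G) * (U : Set G)) = ⊤)
    (hK : U ⊔ ⨆ i, K i = ⊤) : ∃ s : Finset ι, U ⊔ ⨆ i ∈ s, K i = ⊤ := by
  classical
  obtain ⟨F, hF⟩ := hgen
  let D : Finset ι → Subgroup G := fun s => U ⊔ ⨆ i ∈ s, K i
  have hD : Monotone D := fun s t hst => sup_le_sup_left (biSup_mono fun i hi => hst hi) U
  have hDtop : U ⊔ ⨆ i, K i ≤ ⨆ s, D s :=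
    sup_le (le_iSup_of_le ∅ le_sup_left) <| iSup_le fun i =>
      le_iSup_of_le {i} <| le_sup_of_le_right <| le_biSup K (Finset.mem_singleton_self i)
  have hmem : ∀ x ∈ F, ∃ s, x ∈ D s := fun x _ =>
    (mem_iSup_of_directed hD.directed_le).1 (hDtop (hK ▸ mem_top x))
  choose s hs using hmem
  refine ⟨F.attach.sup fun x => s x.1 x.2, eq_top_iff.2 ?_⟩
  rw [← hF, closure_le]
  rintro _ ⟨x, hx, u, hu, rfl⟩
  exact mul_mem (hD (Finset.le_sup (Finset.mem_attach F ⟨x, hx⟩)) (hs x hx)) (mem_sup_left hu)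

theorem exists_finite_conj_invariant_sup_sSup_eq_top {U : Subgroup G} {κ : Set (Subgroup G)}
    (hgen : ∃ F : Finset G, Subgroup.closure ((F : Set G) * (U : Set G)) = ⊤)
    (hκ : U ⊔ ⨆ K : κ, (K : Subgroup G) = ⊤)
    (hinv : ∀ u ∈ U, ∀ K ∈ κ, toConjAct u • K ∈ κ)
    (hfin : ∀ K ∈ κ, {K' : Subgroup G | ∃ u ∈ U, K' = toConjAct u • K}.Finite) :
    ∃ O ⊆ κ, O.Finite ∧ (∀ u ∈ U, ∀ K ∈ O, toConjAct u • K ∈ O) ∧ U ⊔ sSup O = ⊤ := by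
  obtain ⟨s, hs⟩ := exists_finset_sup_biSup_eq_top hgen hκ
  let O := ⋃ K ∈ s, {K' : Subgroup G | ∃ u ∈ U, K' = toConjAct u • (K : Subgroup G)}
  refine ⟨O, ?_, s.finite_toSet.biUnion fun K _ => hfin K K.2, ?_, ?_⟩
  · simp only [O, Set.iUnion_subset_iff]
    rintro K - _ ⟨u, hu, rfl⟩
    exact hinv u hu K K.2
  · simp only [O, Set.mem_iUnion]
    rintro u hu _ ⟨K, hK, v, hv, rfl⟩
    exact ⟨K, hK, u * v, mul_mem hu hv, by rw [toConjAct_mul, mul_smul]⟩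
  · refine eq_top_iff.2 (hs ▸ sup_le_sup_left (iSup₂_le fun K hK => le_sSup ?_) U)
    exact Set.mem_biUnion hK ⟨1, one_mem U, by simp⟩

theorem smul_normalizer (g : G) (H : Subgroup G) :
    toConjAct g • normalizer (H : Set G) = normalizer ((toConjAct g • H : Subgroup G) : Set G) := by
  ext x
  simp only [mem_pointwise_smul_iff_inv_smul_mem, ← conjAct_pointwise_smul_iff, ← toConjAct_inv,
    toConjAct_smul, toConjAct_mul, mul_smul]
  rw [inv_inv, toConjAct_inv, inv_smul_eq_iff]

section Invariant

variable {ι : Type*} {U : Subgroup G} {K : ι → Subgroup G}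

theorem exists_smul_eq_of_forall_exists_smul_eq
    (hperm : ∀ i, ∀ u ∈ U, ∃ j, toConjAct u • K i = K j) {u : G} (hu : u ∈ U) (j : ι) :
    ∃ i, toConjAct u • K i = K j := by
  obtain ⟨i, hi⟩ := hperm j u⁻¹ (inv_mem hu)
  exact ⟨i, by rw [← hi, toConjAct_inv, smul_inv_smul]⟩

theorem exists_normalizing_subgroup_relIndex_ne_zero [Finite ι]
    (hperm : ∀ i, ∀ u ∈ U, ∃ j, toConjAct u • K i = K j)
    (hfin : ∀ i, {K' : Subgroup G | ∃ u ∈ U, K' = toConjAct u • K i}.Finite) :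
    ∃ N ≤ U, N.relIndex U ≠ 0 ∧ U ≤ normalizer (N : Set G) ∧
      ∀ i, N ≤ normalizer (K i : Set G) := by
  refine ⟨U ⊓ ⨅ i, normalizer (K i : Set G), inf_le_left, ?_, ?_,
    fun i => inf_le_right.trans (iInf_le _ i)⟩
  · exact relIndex_inf_ne_zero (by simp)
      (relIndex_iInf_ne_zero fun i => relIndex_normalizer_ne_zero (hfin i))
  · refine le_normalizer_of_forall_smul_le fun u hu => ?_
    rw [smul_inf, conjAct_pointwise_smul_eq_self (le_normalizer hu)]
    refine inf_le_inf_left U (le_iInf fun j => ?_)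
    obtain ⟨i, hi⟩ := exists_smul_eq_of_forall_exists_smul_eq hperm hu j
    calc toConjAct u • ⨅ i, normalizer (K i : Set G)
        ≤ toConjAct u • normalizer (K i : Set G) :=
          pointwise_smul_le_pointwise_smul_iff.2 (iInf_le _ i)
      _ = normalizer (K j : Set G) := by rw [smul_normalizer, hi]

theorem le_normalizer_iSup_inf {N : Subgroup G}
    (hperm : ∀ i, ∀ u ∈ U, ∃ j, toConjAct u • K i = K j) (hUN : U ≤ normalizer (N : Set G)) :
    U ≤ normalizer ((⨆ i, N ⊓ K i : Subgroup G) : Set G) := by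
  refine le_normalizer_of_forall_smul_le fun u hu => ?_
  rw [pointwise_smul_subset_iff]
  refine iSup_le fun i => ?_
  obtain ⟨j, hj⟩ := hperm i u hu
  rw [subset_pointwise_smul_iff, inv_inv, smul_inf, conjAct_pointwise_smul_eq_self (hUN hu), hj]
  exact le_iSup (fun i => N ⊓ K i) j

end Invariant

theorem inf_smul_le_smul_of_mem {N L K : Subgroup G} (hLN : L ≤ N) (hNK : N ⊓ K ≤ L)
    (hN : N ≤ normalizer (K : Set G)) {k : G} (hk : k ∈ K) :
    L ⊓ toConjAct k • N ≤ toConjAct k • L := by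
  intro x hx
  obtain ⟨hxL, hxN⟩ := mem_inf.1 hx
  rw [mem_pointwise_smul_iff_inv_smul_mem, ← toConjAct_inv, toConjAct_smul, inv_inv] at hxN ⊢
  have hcK : k⁻¹ * (x * k * x⁻¹) ∈ K :=
    mul_mem (inv_mem hk) ((mem_normalizer_iff.1 (hN (hLN hxL)) k).1 hk)
  have hcN : k⁻¹ * x * k * x⁻¹ ∈ N := mul_mem hxN (inv_mem (hLN hxL))
  have hcL : k⁻¹ * x * k * x⁻¹ ∈ L := hNK (mem_inf.2 ⟨hcN, by simpa only [mul_assoc] using hcK⟩)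
  simpa using mul_mem hcL hxL

theorem relIndex_smul_ne_zero_of_le {U N L : Subgroup G} {g : G}
    (hU : Commensurable (toConjAct g • U) U) (hN : N.relIndex U ≠ 0) (hL : L ≤ U) :
    (toConjAct g • N).relIndex L ≠ 0 := by
  have hgN : (toConjAct g • N).relIndex (toConjAct g • U) ≠ 0 := by
    rwa [relIndex_pointwise_smul]
  exact fun h => relIndex_ne_zero_trans hgN hU.1 (relIndex_eq_zero_of_le_right hL h)

theorem relIndex_smul_self_ne_zero_of_mem {U N L K : Subgroup G} (hLU : L ≤ U) (hLN : L ≤ N)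
    (hNK : N ⊓ K ≤ L) (hNnorm : N ≤ normalizer (K : Set G)) (hN : N.relIndex U ≠ 0)
    {k : G} (hU : Commensurable (toConjAct k • U) U) (hk : k ∈ K) :
    (toConjAct k • L).relIndex L ≠ 0 := by
  have h := relIndex_smul_ne_zero_of_le hU hN hLU
  rw [← inf_relIndex_left] at h
  exact fun h0 => h (relIndex_eq_zero_of_le_left (inf_smul_le_smul_of_mem hLN hNK hNnorm hk) h0)

theorem le_commensurator_of_forall_relIndex_ne_zero {H L : Subgroup G}
    (h : ∀ g ∈ H, (toConjAct g • L).relIndex L ≠ 0) : H ≤ Commensurable.commensurator L := by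
  intro g hg
  refine ⟨h g hg, ?_⟩
  change L.relIndex (toConjAct g • L) ≠ 0
  rw [← relIndex_pointwise_smul (toConjAct g⁻¹), ← mul_smul, ← toConjAct_mul, inv_mul_cancel,
    toConjAct_one, one_smul]
  exact h g⁻¹ (inv_mem hg)

theorem coe_iSup_eq_prod_ofFn {n : ℕ} (L : Fin n → Subgroup G)
    (h : ∀ i j, L i ≤ normalizer (L j : Set G)) :
    ((⨆ i, L i : Subgroup G) : Set G) = (List.ofFn fun i => (L i : Set G)).prod := by
  induction n with
  | zero =>
    rw [iSup_of_empty, coe_bot]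
    rfl
  | succ n ih =>
    have hsplit : ⨆ i, L i = L 0 ⊔ ⨆ i : Fin n, L i.succ :=
      le_antisymm (iSup_le (Fin.cases le_sup_left fun i =>
        le_sup_of_le_right (le_iSup (fun i : Fin n => L i.succ) i)))
        (sup_le (le_iSup L 0) (iSup_le fun i => le_iSup L i.succ))
    have hnorm : L 0 ≤ normalizer ((⨆ i : Fin n, L i.succ : Subgroup G) : Set G) :=
      fun x hx => iInf_normalizer_le_normalizer_iSup _ (mem_iInf.2 fun i => h 0 i.succ hx)
    rw [hsplit, coe_mul_of_left_le_normalizer_right _ _ hnorm, List.ofFn_succ, List.prod_cons,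
      ih _ fun i j => h i.succ j.succ]

theorem exists_normalizing_commensurated_product {n : ℕ} {U : Subgroup G} {K : Fin n → Subgroup G}
    (hU : ∀ g : G, Commensurable (toConjAct g • U) U)
    (hind : ∀ i, U.relIndex (K i) ≠ 0)
    (hperm : ∀ i, ∀ u ∈ U, ∃ j, toConjAct u • K i = K j)
    (hfin : ∀ i, {K' : Subgroup G | ∃ u ∈ U, K' = toConjAct u • K i}.Finite)
    (hgen : U ⊔ ⨆ i, K i = ⊤) :
    ∃ Ls : Fin n → Subgroup G, (∀ i, Ls i ≤ U) ∧ (∀ i, Ls i ≤ K i ∧ (Ls i).relIndex (K i) ≠ 0) ∧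
      (∀ i j, Ls i ≤ normalizer (K j : Set G) ∧ Ls i ≤ normalizer (Ls j : Set G)) ∧
      ∃ L : Subgroup G, (L : Set G) = (List.ofFn fun i => (Ls i : Set G)).prod ∧ L ≤ U ∧
        U ≤ normalizer (L : Set G) ∧ Commensurable.commensurator L = ⊤ := by
  obtain ⟨N, hNU, hNrel, hUN, hNK⟩ := exists_normalizing_subgroup_relIndex_ne_zero hperm hfin
  have hLnorm : ∀ i j, N ⊓ K i ≤ normalizer ((N ⊓ K j : Subgroup G) : Set G) := fun i j =>
    inf_le_left.trans ((le_inf (hNU.trans hUN) (hNK j)).trans inf_normalizer_le_normalizer_inf)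
  have hLU : ⨆ i, N ⊓ K i ≤ U := iSup_le fun i => inf_le_left.trans hNU
  have hUL := le_normalizer_iSup_inf hperm hUN
  have hcomm : Commensurable.commensurator (⨆ i, N ⊓ K i) = ⊤ := by
    refine eq_top_iff.2 (hgen ▸ sup_le ?_ (iSup_le fun i => ?_)) <;>
      refine le_commensurator_of_forall_relIndex_ne_zero fun g hg => ?_
    · rw [conjAct_pointwise_smul_eq_self (hUL hg), relIndex_self]
      exact one_ne_zero
    · exact relIndex_smul_self_ne_zero_of_mem hLU (iSup_le fun _ => inf_le_left)
        (le_iSup (fun i => N ⊓ K i) i) (hNK i) hNrel (hU g) hg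
  refine ⟨fun i => N ⊓ K i, fun i => inf_le_left.trans hNU, fun i => ⟨inf_le_right, ?_⟩,
    fun i j => ⟨inf_le_left.trans (hNK j), hLnorm i j⟩,
    ⨆ i, N ⊓ K i, coe_iSup_eq_prod_ofFn _ hLnorm, hLU, hUL, hcomm⟩
  rw [inf_relIndex_right]
  exact relIndex_ne_zero_trans hNrel (hind i)

end Subgroup

end

/-- (Lemma on Hecke pairs.) Given a Hecke pair `(G,U)` with `G` generated by
finitely many cosets of `U`, and a set `κ` of subgroups with `G = ⟨U, κ⟩`, on which `U` acts by
conjugation with finite orbits and each of whose members meets `U` in finite index, there is a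
finite union of `U`-orbits `{K_1,…,K_n} ⊆ κ` with `G = ⟨U, K_1,…,K_n⟩`; and for any such subset
there are finite-index subgroups `L_i ≤ U ∩ K_i` normalising all `K_j, L_j`, whose product
`L = L_1 ⋯ L_n` is a normal subgroup of `U` commensurated by `G`. -/
theorem hecke_pair_boxlem
    (G : Type*) [Group G] (U : Subgroup G) (hcommU : CommensuratedBy U)
    (hgen : ∃ F : Finset G, Subgroup.closure ((F : Set G) * (U : Set G)) = ⊤)
    (κ : Set (Subgroup G))
    (hgenκ : Subgroup.closure ((U : Set G) ∪ ⋃ K ∈ κ, (K : Set G)) = ⊤)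
    (hκinv : ∀ u ∈ U, ∀ K ∈ κ, conjSub u K ∈ κ)
    (hκfin : ∀ K ∈ κ, {K' : Subgroup G | ∃ u ∈ U, K' = conjSub u K}.Finite)
    (hκind : ∀ K ∈ κ, U.relIndex K ≠ 0) :
    (∃ n : ℕ, ∃ Ks : Fin n → Subgroup G, (∀ i, Ks i ∈ κ) ∧
      (∀ i, ∀ u ∈ U, ∃ j, conjSub u (Ks i) = Ks j) ∧
      Subgroup.closure ((U : Set G) ∪ ⋃ i, (Ks i : Set G)) = ⊤) ∧
    (∀ n : ℕ, ∀ Ks : Fin n → Subgroup G, (∀ i, Ks i ∈ κ) →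
      (∀ i, ∀ u ∈ U, ∃ j, conjSub u (Ks i) = Ks j) →
      Subgroup.closure ((U : Set G) ∪ ⋃ i, (Ks i : Set G)) = ⊤ →
      ∃ Ls : Fin n → Subgroup G,
        (∀ i, Ls i ≤ U) ∧
        (∀ i, Ls i ≤ Ks i ∧ (Ls i).relIndex (Ks i) ≠ 0) ∧
        (∀ i j, Ls i ≤ Subgroup.normalizer (Ks j : Set G) ∧ Ls i ≤ Subgroup.normalizer (Ls j : Set G)) ∧
        (∃ L : Subgroup G,
          (L : Set G) = (List.ofFn fun i => ((Ls i : Subgroup G) : Set G)).prod ∧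
          L ≤ U ∧ (∀ u ∈ U, ∀ x ∈ L, u * x * u⁻¹ ∈ L) ∧ CommensuratedBy L)) := by
  simp only [conjSub_eq_smul, commensuratedBy_iff_commensurator_eq_top,
    Subgroup.closure_union_iUnion] at hgenκ hκinv hκfin ⊢
  refine ⟨?_, fun n Ks hmem hperm hgenKs => ?_⟩
  · rw [Set.biUnion_eq_iUnion, Subgroup.closure_union_iUnion] at hgenκ
    obtain ⟨O, hOκ, hOfin, hOinv, hOgen⟩ :=
      Subgroup.exists_finite_conj_invariant_sup_sSup_eq_top hgen hgenκ hκinv hκfin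
    obtain ⟨n, Ks, rfl⟩ := hOfin.fin_embedding
    refine ⟨n, Ks, fun i => hOκ ⟨i, rfl⟩, fun i u hu => ?_, by rwa [← sSup_range]⟩
    obtain ⟨j, hj⟩ := hOinv u hu _ ⟨i, rfl⟩
    exact ⟨j, hj.symm⟩
  · obtain ⟨Ls, hLsU, hLsK, hLsnorm, L, hLprod, hLU, hUL, hLcomm⟩ :=
      Subgroup.exists_normalizing_commensurated_product hcommU (fun i => hκind _ (hmem i)) hperm
        (fun i => hκfin _ (hmem i)) hgenKs
    exact ⟨Ls, hLsU, hLsK, hLsnorm, L, hLprod, hLU,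
      fun u hu x hx => (Subgroup.mem_normalizer_iff.1 (hUL hu) x).1 hx, hLcomm⟩
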